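/- arXiv:2204.01237 — 5 statements merged into one kernel-verified Lean document; each statement's English description precedes it below -/
import Mathlib

section
/- For every real number r ≥ 0, the discriminant Φ(r) = (4c(r) + c(r)·r − 8b(r))² + 24·c(r)·(r·b(r) + 4b(r) − 2a(r)) satisfies Φ(r) = −12r(r+8)/((2+r)²(4+r)²(6+r)²); consequently Φ(r) ≤ 0, and Φ(r) < 0 whenever r > 0. -/
noncomputable def vankaA (r : ℝ) : ℝ := (r^2 + 8*r + 14) / ((2+r)*(4+r)*(6+r))
noncomputable def vankaB (r : ℝ) : ℝ := 1 / ((2+r)*(6+r))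
noncomputable def vankaC (r : ℝ) : ℝ := 2 / ((2+r)*(4+r)*(6+r))

noncomputable def Phi (r : ℝ) : ℝ :=
  (4 * vankaC r + vankaC r * r - 8 * vankaB r)^2
    + 24 * vankaC r * (r * vankaB r + 4 * vankaB r - 2 * vankaA r)

theorem discriminant_nonpositive (r : ℝ) (hr : 0 ≤ r) :
    Phi r = -(12 * r * (r + 8)) / ((2+r)^2 * (4+r)^2 * (6+r)^2) ∧
    Phi r ≤ 0 ∧ (0 < r → Phi r < 0) := by
  have h2 : (2 + r) ≠ 0 := by positivity
  have h4 : (4 + r) ≠ 0 := by positivity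
  have h6 : (6 + r) ≠ 0 := by positivity
  have hden : (0:ℝ) < (2+r)^2 * (4+r)^2 * (6+r)^2 := by positivity
  have heq : Phi r = -(12 * r * (r + 8)) / ((2+r)^2 * (4+r)^2 * (6+r)^2) := by
    unfold Phi vankaA vankaB vankaC
    field_simp
    ring
  refine ⟨heq, ?_, ?_⟩
  · rw [heq]
    apply div_nonpos_of_nonpos_of_nonneg
    · nlinarith
    · positivity
  · intro hrpos
    rw [heq]
    apply div_neg_of_neg_of_pos
    · nlinarith
    · positivity
end

section
/- Let r ≥ 0 and let ψ(η₁,η₂) = (a(r) + b(r)η₁ + b(r)η₂ + c(r)η₁η₂)(4 + r − 2η₁ − 2η₂) on the region D = ([−1,1] × [−1,0]) ∪ ([−1,0] × [0,1]). Then for every (η₁,η₂) ∈ D, ψ(η₁,η₂) ≤ ψ(−1,−1) = (a(r) − 2b(r) + c(r))(8 + r); i.e. the maximum of ψ over D is attained at (−1,−1). -/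
noncomputable def psi (r η₁ η₂ : ℝ) : ℝ :=
  (vankaA r + vankaB r * η₁ + vankaB r * η₂ + vankaC r * η₁ * η₂) * (4 + r - 2*η₁ - 2*η₂)

def regionD : Set (ℝ × ℝ) :=
  (Set.Icc (-1 : ℝ) 1 ×ˢ Set.Icc (-1 : ℝ) 0) ∪ (Set.Icc (-1 : ℝ) 0 ×ˢ Set.Icc (0 : ℝ) 1)

lemma psi_eq (r x y : ℝ) (hr : 0 ≤ r) :
    psi r x y = ((r^2 + 8*r + 14 + (4+r)*x + (4+r)*y + 2*x*y) * (4 + r - 2*x - 2*y)) /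
      ((2+r)*(4+r)*(6+r)) := by
  have h2 : (2:ℝ)+r ≠ 0 := by linarith
  have h4 : (4:ℝ)+r ≠ 0 := by linarith
  have h6 : (6:ℝ)+r ≠ 0 := by linarith
  unfold psi vankaA vankaB vankaC
  field_simp

theorem psi_max_on_D (r : ℝ) (hr : 0 ≤ r) :
    (∀ η : ℝ × ℝ, η ∈ regionD → psi r η.1 η.2 ≤ psi r (-1) (-1)) ∧
    psi r (-1) (-1) = (vankaA r - 2 * vankaB r + vankaC r) * (8 + r) := by
  have hd : (0:ℝ) < (2+r)*(4+r)*(6+r) := by positivity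
  constructor
  · rintro ⟨x, y⟩ hmem
    have hx : -1 ≤ x := by
      rcases hmem with ⟨⟨h, _⟩, _⟩ | ⟨⟨h, _⟩, _⟩ <;> exact h
    have hy : -1 ≤ y := by
      rcases hmem with ⟨_, ⟨h, _⟩⟩ | ⟨_, ⟨h, _⟩⟩ <;> linarith
    have hu : 0 ≤ 1 + x := by linarith
    have hv : 0 ≤ 1 + y := by linarith
    rw [psi_eq r x y hr, psi_eq r (-1) (-1) hr, div_le_div_iff_of_pos_right hd]
    nlinarith [sq_nonneg (x - y), mul_nonneg (mul_nonneg hu hv) hu,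
      mul_nonneg (mul_nonneg hu hv) hv, mul_nonneg hr hu, mul_nonneg hr hv,
      mul_nonneg (mul_nonneg hr hu) hu, mul_nonneg (mul_nonneg hr hv) hv,
      mul_nonneg (mul_nonneg hr hu) hv, mul_nonneg (mul_nonneg hr hr) hu,
      mul_nonneg (mul_nonneg hr hr) hv]
  · have h2 : (2:ℝ)+r ≠ 0 := by linarith
    have h4 : (4:ℝ)+r ≠ 0 := by linarith
    have h6 : (6:ℝ)+r ≠ 0 := by linarith
    unfold psi vankaA vankaB vankaC
    field_simp
    ring
end

section
/- Let r ≥ 0 and let ψ(η₁,η₂) = (a(r) + b(r)η₁ + b(r)η₂ + c(r)η₁η₂)(4 + r − 2η₁ − 2η₂). Then for every η₂ ∈ [−1,1], (a(r) − c(r))(4 + r) ≤ ψ(−1, η₂) ≤ (a(r) − 2b(r) + c(r))(8 + r); i.e. on the boundary segment {−1} × [−1,1], ψ attains its maximum at η₂ = −1 and its minimum at η₂ = 1. -/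
theorem psi_boundary_D1 (r : ℝ) (hr : 0 ≤ r) :
    ∀ η₂ : ℝ, η₂ ∈ Set.Icc (-1 : ℝ) 1 →
      (vankaA r - vankaC r) * (4 + r) ≤ psi r (-1) η₂ ∧
      psi r (-1) η₂ ≤ (vankaA r - 2 * vankaB r + vankaC r) * (8 + r) := by
  intro η₂ ⟨h1, h2⟩
  have h2p : (0:ℝ) < 2 + r := by linarith
  have h4p : (0:ℝ) < 4 + r := by linarith
  have h6p : (0:ℝ) < 6 + r := by linarith
  have hD : (0:ℝ) < (2+r)*(4+r)*(6+r) := by positivity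
  unfold psi vankaA vankaB vankaC
  have hψ : ((r^2 + 8*r + 14) / ((2+r)*(4+r)*(6+r)) + 1/((2+r)*(6+r)) * (-1)
      + 1/((2+r)*(6+r)) * η₂ + 2/((2+r)*(4+r)*(6+r)) * (-1) * η₂) * (4 + r - 2*(-1) - 2*η₂)
      = (2+r)*(r+5+η₂)*(6+r-2*η₂) / ((2+r)*(4+r)*(6+r)) := by
    field_simp
    ring
  constructor
  · have hlhs : ((r^2 + 8*r + 14) / ((2+r)*(4+r)*(6+r)) - 2/((2+r)*(4+r)*(6+r))) * (4 + r)
        = (2+r)*(r+6)*(4+r) / ((2+r)*(4+r)*(6+r)) := by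
      rw [div_sub_div_same, div_mul_eq_mul_div, div_eq_div_iff hD.ne' hD.ne']
      ring
    rw [hψ, hlhs, div_le_div_iff₀ hD hD]
    have hfac : (2+r)*(r+6)*(4+r) ≤ (2+r)*(r+5+η₂)*(6+r-2*η₂) := by
      nlinarith [mul_nonneg (by linarith : (0:ℝ) ≤ 1 - η₂) (by linarith : (0:ℝ) ≤ r + 6 + 2*η₂), h2p.le]
    nlinarith [hD]
  · have hrhs : ((r^2 + 8*r + 14) / ((2+r)*(4+r)*(6+r)) - 2 * (1/((2+r)*(6+r)))
        + 2/((2+r)*(4+r)*(6+r))) * (8 + r)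
        = (2+r)*(r+4)*(8+r) / ((2+r)*(4+r)*(6+r)) := by
      field_simp
      ring
    rw [hψ, hrhs, div_le_div_iff₀ hD hD]
    have hfac : (2+r)*(r+5+η₂)*(6+r-2*η₂) ≤ (2+r)*(r+4)*(8+r) := by
      nlinarith [mul_nonneg (by linarith : (0:ℝ) ≤ 1 + η₂) (by linarith : (0:ℝ) ≤ r + 2*(1+η₂)), h2p.le]
    nlinarith [hD]
end

section
/- Let r ≥ 0 and let ψ(η₁,η₂) = (a(r) + b(r)η₁ + b(r)η₂ + c(r)η₁η₂)(4 + r − 2η₁ − 2η₂). Then for every η₂ ∈ [−1,0], (a(r) + b(r))(2 + r) ≤ ψ(1, η₂) ≤ (a(r) − c(r))(4 + r); i.e. on the boundary segment {1} × [−1,0], ψ attains its maximum at η₂ = −1 and its minimum at η₂ = 0. -/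
theorem psi_boundary_D3 (r : ℝ) (hr : 0 ≤ r) :
    ∀ η₂ : ℝ, η₂ ∈ Set.Icc (-1 : ℝ) 0 →
      (vankaA r + vankaB r) * (2 + r) ≤ psi r 1 η₂ ∧
      psi r 1 η₂ ≤ (vankaA r - vankaC r) * (4 + r) := by
  intro η₂ ⟨h1, h2⟩
  have h2pos : (0:ℝ) < 2 + r := by linarith
  have h4pos : (0:ℝ) < 4 + r := by linarith
  have h6pos : (0:ℝ) < 6 + r := by linarith
  have h2ne := h2pos.ne'
  have h4ne := h4pos.ne'
  have h6ne := h6pos.ne'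
  constructor
  · rw [← sub_nonneg]
    have : psi r 1 η₂ - (vankaA r + vankaB r) * (2 + r)
        = (-η₂) * (4 + r + 2*η₂) / ((2+r)*(4+r)) := by
      unfold psi vankaA vankaB vankaC
      field_simp
      ring
    rw [this]
    have : (0:ℝ) ≤ (-η₂) * (4 + r + 2*η₂) := by nlinarith
    positivity
  · rw [← sub_nonneg]
    have : (vankaA r - vankaC r) * (4 + r) - psi r 1 η₂
        = (η₂ + 1) * (2*η₂ + 2 + r) / ((2+r)*(4+r)) := by
      unfold psi vankaA vankaB vankaC
      field_simp
      ring
    rw [this]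
    have : (0:ℝ) ≤ (η₂ + 1) * (2*η₂ + 2 + r) := by nlinarith
    positivity
end

section
/- Let r ≥ 0 and let ψ(η₁,η₂) = (a(r) + b(r)η₁ + b(r)η₂ + c(r)η₁η₂)(4 + r − 2η₁ − 2η₂). Then for every η₁ ∈ [0,1], (a(r) + b(r))(2 + r) ≤ ψ(η₁, 0) ≤ a(r)(4 + r); i.e. on the boundary segment [0,1] × {0}, ψ attains its maximum at η₁ = 0 and its minimum at η₁ = 1. -/
theorem psi_boundary_D4 (r : ℝ) (hr : 0 ≤ r) :
    ∀ η₁ : ℝ, η₁ ∈ Set.Icc (0 : ℝ) 1 →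
      (vankaA r + vankaB r) * (2 + r) ≤ psi r η₁ 0 ∧
      psi r η₁ 0 ≤ vankaA r * (4 + r) := by
  intro x hx
  obtain ⟨h0, h1⟩ := hx
  have h2 : (0:ℝ) < 2 + r := by linarith
  have h4 : (0:ℝ) < 4 + r := by linarith
  have h6 : (0:ℝ) < 6 + r := by linarith
  have hD : (0:ℝ) < (2+r)*(4+r)*(6+r) := by positivity
  have e1 : psi r x 0 =
      ((r^2 + 8*r + 14) + (4+r)*x) * (4 + r - 2*x) / ((2+r)*(4+r)*(6+r)) := by
    unfold psi vankaA vankaB vankaC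
    field_simp
    ring
  have e2 : (vankaA r + vankaB r) * (2 + r) =
      ((r^2 + 8*r + 14) + (4+r)) * (2+r) / ((2+r)*(4+r)*(6+r)) := by
    unfold vankaA vankaB
    field_simp
  have e3 : vankaA r * (4 + r) =
      (r^2 + 8*r + 14) * (4+r) / ((2+r)*(4+r)*(6+r)) := by
    unfold vankaA
    field_simp
  rw [e1, e2, e3, div_le_div_iff_of_pos_right hD, div_le_div_iff_of_pos_right hD]
  constructor
  · nlinarith [mul_nonneg (sub_nonneg.2 h1) h0, mul_nonneg (sub_nonneg.2 h1) hr,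
      mul_nonneg (mul_nonneg (sub_nonneg.2 h1) h0) hr, sq_nonneg (1-x),
      mul_nonneg (mul_nonneg hr hr) (sub_nonneg.2 h1)]
  · nlinarith [mul_nonneg h0 hr, mul_nonneg (mul_nonneg h0 h0) hr, sq_nonneg x,
      mul_nonneg (mul_nonneg h0 hr) hr]
end
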